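/- arXiv:1501.07476 — 2 statements merged into one kernel-verified Lean document; each statement's English description precedes it below -/
import Mathlib

section
/- If every solution of the recurrence Vᵢ = aᵢVᵢ₋₁ − Vᵢ₋₂ with n-periodic coefficients aᵢ is n-antiperiodic (Vᵢ₊ₙ = −Vᵢ), then the continuants satisfy K(aᵢ,…,aᵢ₊ₙ₋₃) = 1 and K(aᵢ,…,aᵢ₊ₙ₋₂) = 0 for all i. -/
/-- Reversed continuant: `contRev [aₙ, …, a₁] = K(a₁,…,aₙ)`. -/
def contRev {R : Type*} [CommRing R] : List R → R
  | [] => 1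
  | [a] => a
  | a :: b :: t => a * contRev (b :: t) - contRev t

/-- The classical continuant `K(a₁,…,aₙ)`. -/
def continuant {R : Type*} [CommRing R] (l : List R) : R := contRev l.reverse

/-! Let `V` be the solution with `Vᵢ₋₂ = 0`, `Vᵢ₋₁ = 1`; it exists on all of `ℤ` because the
recurrence can be run backwards as well as forwards. The continuant recurrence shows
`K(aᵢ, …, aᵢ₊ₘ₋₁) = Vᵢ₋₁₊ₘ`, and antiperiodicity gives `Vᵢ₋₃₊ₙ = -Vᵢ₋₃ = 1` and
`Vᵢ₋₂₊ₙ = -Vᵢ₋₂ = 0`. -/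

section ThreeTermRecurrence

variable {R : Type*} [CommRing R]

def IsThreeTermSolution (a : ℤ → R) (V : ℤ → R) : Prop :=
  ∀ j, V j = a j * V (j - 1) - V (j - 2)

def threeTermSeq (c : ℕ → R) (x y : R) : ℕ → R
  | 0 => x
  | 1 => y
  | k + 2 => c k * threeTermSeq c x y (k + 1) - threeTermSeq c x y k

/-- Read backwards, `Wₘ = V₁₋ₘ` satisfies a recurrence of the same shape, with coefficients
`a₁₋ₘ` and initial values swapped; the two one-sided solutions agree on the overlap `j = 0, 1`. -/
def twoSidedSolution (a : ℤ → R) (x y : R) (j : ℤ) : R :=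
  if 0 ≤ j then threeTermSeq (fun k => a (k + 2)) x y j.toNat
  else threeTermSeq (fun k => a (1 - k)) y x (1 - j).toNat

variable (a : ℤ → R) (x y : R)

lemma twoSidedSolution_natCast (k : ℕ) :
    twoSidedSolution a x y k = threeTermSeq (fun k => a (k + 2)) x y k := by
  simp [twoSidedSolution]

lemma twoSidedSolution_one_sub_natCast (k : ℕ) :
    twoSidedSolution a x y (1 - k) = threeTermSeq (fun k => a (1 - k)) y x k := by
  match k with
  | 0 => simp [twoSidedSolution, threeTermSeq]
  | 1 => simp [twoSidedSolution, threeTermSeq]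
  | k + 2 =>
    rw [twoSidedSolution, if_neg (by omega)]
    congr 1
    omega

lemma isThreeTermSolution_twoSidedSolution :
    IsThreeTermSolution a (twoSidedSolution a x y) := by
  intro j
  rcases le_or_gt 2 j with hj | hj
  · obtain ⟨k, rfl⟩ : ∃ k : ℕ, j = (k + 2 : ℕ) := ⟨(j - 2).toNat, by omega⟩
    have h1 : ((k + 2 : ℕ) : ℤ) - 1 = (k + 1 : ℕ) := by push_cast; ring
    have h2 : ((k + 2 : ℕ) : ℤ) - 2 = k := by push_cast; ring
    simp only [h1, h2, twoSidedSolution_natCast, threeTermSeq]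
    push_cast
    rfl
  · obtain ⟨m, rfl⟩ : ∃ m : ℕ, j = 1 - m := ⟨(1 - j).toNat, by omega⟩
    have h1 : 1 - (m : ℤ) - 1 = 1 - (m + 1 : ℕ) := by push_cast; ring
    have h2 : 1 - (m : ℤ) - 2 = 1 - (m + 2 : ℕ) := by push_cast; ring
    simp only [h1, h2, twoSidedSolution_one_sub_natCast, threeTermSeq]
    ring

lemma IsThreeTermSolution.comp_sub_right {V : ℤ → R} (s : ℤ)
    (hV : IsThreeTermSolution (fun j => a (j + s)) V) :
    IsThreeTermSolution a (fun j => V (j - s)) := by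
  intro j
  simpa only [sub_add_cancel, sub_right_comm _ s] using hV (j - s)

lemma exists_isThreeTermSolution (i : ℤ) :
    ∃ V, IsThreeTermSolution a V ∧ V (i - 2) = x ∧ V (i - 1) = y :=
  ⟨_, (isThreeTermSolution_twoSidedSolution _ x y).comp_sub_right a (i - 2),
    by simp [twoSidedSolution, threeTermSeq], by simp [twoSidedSolution, threeTermSeq]⟩

end ThreeTermRecurrence

lemma ofFn_shift_succ {α : Type*} (a : ℤ → α) (i : ℤ) (m : ℕ) :
    (List.ofFn fun k : Fin (m + 1) => a (i + (k : ℕ))) =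
      (List.ofFn fun k : Fin m => a (i + (k : ℕ))) ++ [a (i + m)] := by
  rw [List.ofFn_succ', List.concat_eq_append]
  rfl

section Continuant

variable {R : Type*} [CommRing R]

lemma continuant_append_pair (l : List R) (x y : R) :
    continuant (l ++ [x, y]) = y * continuant (l ++ [x]) - continuant l := by
  simp [continuant, contRev]

lemma IsThreeTermSolution.continuant_eq {a V : ℤ → R} (hV : IsThreeTermSolution a V) {i : ℤ}
    (h₀ : V (i - 2) = 0) (h₁ : V (i - 1) = 1) (m : ℕ) :
    continuant (List.ofFn fun k : Fin m => a (i + (k : ℕ))) = V (i - 1 + m) := by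
  induction m using Nat.strong_induction_on with
  | _ m ih =>
    match m with
    | 0 => simp [continuant, contRev, h₁]
    | 1 => simp [continuant, contRev, hV i, h₀, h₁]
    | m + 2 =>
      rw [ofFn_shift_succ, ofFn_shift_succ, List.append_assoc, List.singleton_append,
        continuant_append_pair, ← ofFn_shift_succ, ih m (by omega), ih (m + 1) (by omega),
        hV (i - 1 + (m + 2 : ℕ))]
      push_cast
      ring_nf

end Continuant

theorem stmt2_general {F : Type*} [Field F] (n : ℕ) (hn : 3 ≤ n) (a : ℤ → F)
    (hanti : ∀ V : ℤ → F,
      (∀ i, V i = a i * V (i - 1) - V (i - 2)) → ∀ i, V (i + n) = -V i) :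
    ∀ i : ℤ,
      continuant (List.ofFn fun k : Fin (n - 2) => a (i + (k : ℕ))) = 1 ∧
      continuant (List.ofFn fun k : Fin (n - 1) => a (i + (k : ℕ))) = 0 := by
  intro i
  obtain ⟨V, hV, h₀, h₁⟩ := exists_isThreeTermSolution a 0 1 i
  have hVanti := hanti V hV
  have h₃ : V (i - 3) = -1 := by
    have h := hV (i - 1)
    rw [show i - 1 - 1 = i - 2 by ring, show i - 1 - 2 = i - 3 by ring, h₀, h₁] at h
    linear_combination h
  constructor
  · rw [hV.continuant_eq h₀ h₁, show i - 1 + ((n - 2 : ℕ) : ℤ) = i - 3 + n by omega, hVanti, h₃,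
      neg_neg]
  · rw [hV.continuant_eq h₀ h₁, show i - 1 + ((n - 1 : ℕ) : ℤ) = i - 2 + n by omega, hVanti, h₀,
      neg_zero]

theorem stmt2 {F : Type*} [Field F] (n : ℕ) (hn : 3 ≤ n) (a : ℤ → F)
    (hper : ∀ i, a (i + n) = a i)
    (hanti : ∀ V : ℤ → F,
      (∀ i, V i = a i * V (i - 1) - V (i - 2)) → ∀ i, V (i + n) = -V i) :
    ∀ i : ℤ,
      continuant (List.ofFn fun k : Fin (n - 2) => a (i + (k : ℕ))) = 1 ∧
      continuant (List.ofFn fun k : Fin (n - 1) => a (i + (k : ℕ))) = 0 :=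
  stmt2_general n hn a hanti
end

section
/- If the monodromy matrix Mᵢ of a supersymmetric Hill equation equals diag(−1,−1,1) for one index i, then Mⱼ = diag(−1,−1,1) for all j ∈ ℤ. -/
/-!
Shifting the window of `Mᵢ` by one step gives the intertwining relation
`Mᵢ₊₁ Aᵢ = Aᵢ₊ₙ Mᵢ`. Since `Aᵢ₊ₙ` is `Aᵢ` with `βᵢ` replaced by `-βᵢ`, it is conjugate to `Aᵢ`
by `D = diag(-1, -1, 1)`: `Aᵢ₊ₙ D = D Aᵢ`. As each `Aᵢ` is invertible (because `βᵢ² = 0`),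
the relation shows `Mᵢ = D ↔ Mᵢ₊₁ = D`, and induction on `ℤ` spreads this to every index.
-/

theorem Int.forall_of_iff_add_one {P : ℤ → Prop} (h : ∀ i, P i ↔ P (i + 1)) {i₀ : ℤ}
    (h₀ : P i₀) (j : ℤ) : P j :=
  Int.inductionOn' j i₀ h₀ (fun k _ hk => (h k).1 hk)
    (fun k _ hk => (h (k - 1)).2 (by rwa [sub_add_cancel]))

section Monodromy

variable {G : Type*} [Monoid G]

def monodromy (A : ℤ → G) (n : ℕ) (i : ℤ) : G :=
  (List.ofFn fun k : Fin n => A (i + (n : ℤ) - 1 - (k : ℕ))).prod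

theorem monodromy_add_one_mul (A : ℤ → G) (n : ℕ) (i : ℤ) :
    monodromy A n (i + 1) * A i = A (i + n) * monodromy A n i := by
  -- both sides split the `n + 1`-fold product `A (i + n) ⋯ A i`
  have hfirst : (List.ofFn fun k : Fin (n + 1) => A (i + (n : ℤ) - (k : ℕ))).prod
      = A (i + n) * monodromy A n i := by
    rw [List.ofFn_succ, List.prod_cons, monodromy]
    congr 2
    · simp
    · congr 1
      funext k
      congr 1
      push_cast [Fin.val_succ]
      ring
  have hlast : (List.ofFn fun k : Fin (n + 1) => A (i + (n : ℤ) - (k : ℕ))).prod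
      = monodromy A n (i + 1) * A i := by
    rw [List.ofFn_succ', List.prod_concat, monodromy]
    congr 2
    · congr 1
      funext k
      congr 1
      push_cast [Fin.val_castSucc]
      ring
    · simp
  rw [← hfirst, hlast]

theorem monodromy_eq_iff_add_one {A : ℤ → G} {n : ℕ} (hA : ∀ i, IsUnit (A i)) {D : G}
    (hD : ∀ i, A (i + n) * D = D * A i) (i : ℤ) :
    monodromy A n i = D ↔ monodromy A n (i + 1) = D := by
  have hstep := monodromy_add_one_mul A n i
  constructor
  · intro hi
    rw [hi, hD] at hstep
    exact (hA i).mul_left_inj.1 hstep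
  · intro hi
    rw [hi, ← hD] at hstep
    exact ((hA (i + n)).mul_right_inj.1 hstep).symm

end Monodromy

section HillMatrix

variable {R : Type*} [Ring R]

def hillMatrix (a b : R) : Matrix (Fin 3) (Fin 3) R := !![0, 1, 0; -1, a, -b; 0, b, 1]

theorem isUnit_hillMatrix (a : R) {b : R} (hb : b * b = 0) :
    IsUnit (hillMatrix a b) := by
  let B : Matrix (Fin 3) (Fin 3) R := !![a, -1, -b; 1, 0, 0; -b, 0, 1]
  have hAB : hillMatrix a b * B = 1 := by
    ext r c
    fin_cases r <;> fin_cases c <;> simp [B, hillMatrix, Matrix.mul_apply, Fin.sum_univ_three, hb]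
  have hBA : B * hillMatrix a b = 1 := by
    ext r c
    fin_cases r <;> fin_cases c <;> simp [B, hillMatrix, Matrix.mul_apply, Fin.sum_univ_three, hb]
  exact ⟨⟨_, B, hAB, hBA⟩, rfl⟩

theorem hillMatrix_neg_mul_diag (a b : R) :
    hillMatrix a (-b) * !![-1, 0, 0; 0, -1, 0; 0, 0, 1]
      = !![-1, 0, 0; 0, -1, 0; 0, 0, 1] * hillMatrix a b := by
  ext r c
  fin_cases r <;> fin_cases c <;> simp [hillMatrix, Matrix.mul_apply, Fin.sum_univ_three]

end HillMatrix

theorem stmt6_general {R : Type*} [Ring R] (n : ℕ) (a β : ℤ → R)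
    (hβsq : ∀ i, β i * β i = 0)
    (haper : ∀ i, a (i + n) = a i)
    (hβper : ∀ i, β (i + n) = -β i)
    (A : ℤ → Matrix (Fin 3) (Fin 3) R)
    (hA : ∀ i, A i = !![0, 1, 0; -1, a i, -β i; 0, β i, 1])
    (M : ℤ → Matrix (Fin 3) (Fin 3) R)
    (hM : ∀ i, M i = (List.ofFn fun k : Fin n => A (i + (n : ℤ) - 1 - (k : ℕ))).prod)
    (i₀ : ℤ) (h : M i₀ = !![-1, 0, 0; 0, -1, 0; 0, 0, 1]) :
    ∀ j : ℤ, M j = !![-1, 0, 0; 0, -1, 0; 0, 0, 1] := by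
  have hA' : ∀ i, A i = hillMatrix (a i) (β i) := hA
  have hM' : M = monodromy A n := funext hM
  have hunit : ∀ i, IsUnit (A i) := fun i => hA' i ▸ isUnit_hillMatrix (a i) (hβsq i)
  have hconj : ∀ i, A (i + n) * !![-1, 0, 0; 0, -1, 0; 0, 0, 1]
      = !![-1, 0, 0; 0, -1, 0; 0, 0, 1] * A i := fun i => by
    rw [hA', hA', haper, hβper, hillMatrix_neg_mul_diag]
  subst hM'
  exact Int.forall_of_iff_add_one (monodromy_eq_iff_add_one hunit hconj) h

theorem stmt6 {R : Type*} [Ring R] (n : ℕ) (hn : 0 < n) (a β : ℤ → R)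
    (ha : ∀ i (x : R), a i * x = x * a i)
    (hββ : ∀ i j, β i * β j = -(β j * β i))
    (hβsq : ∀ i, β i * β i = 0)
    (hβa : ∀ i j, β i * a j = a j * β i)
    (haper : ∀ i, a (i + n) = a i)
    (hβper : ∀ i, β (i + n) = -β i)
    (A : ℤ → Matrix (Fin 3) (Fin 3) R)
    (hA : ∀ i, A i = !![0, 1, 0; -1, a i, -β i; 0, β i, 1])
    (M : ℤ → Matrix (Fin 3) (Fin 3) R)
    (hM : ∀ i, M i = (List.ofFn fun k : Fin n => A (i + (n : ℤ) - 1 - (k : ℕ))).prod)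
    (i₀ : ℤ) (h : M i₀ = !![-1, 0, 0; 0, -1, 0; 0, 0, 1]) :
    ∀ j : ℤ, M j = !![-1, 0, 0; 0, -1, 0; 0, 0, 1] :=
  stmt6_general n a β hβsq haper hβper A hA M hM i₀ h
end
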